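/- Let V be a completely distributive lattice (so every element is the supremum of the coprime elements below it). Then a V-closure space (X, c) satisfies (c∅)(x) = ⊥ and c(A∪B)(x) = (cA)(x) ∨ (cB)(x) for all x ∈ X and A, B ⊆ X if and only if its closure tower satisfies c^p ∅ = ∅ and c^p(A ∪ B) = c^p A ∪ c^p B for all coprime elements p of V. -/
import Mathlib


/-- `p` is a coprime element of the complete lattice `V`. -/
def CoprimeElem {V : Type*} [CompleteLattice V] (p : V) : Prop :=
  ⊥ < p ∧ ∀ u v : V, p ≤ u ⊔ v → p ≤ u ∨ p ≤ v

/-- A `V`-closure space structure: `c : PX → V^X` satisfying (R') and (T'). -/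
def IsVCls {V : Type*} [CompleteLattice V] [Monoid V] (X : Type*)
    (c : Set X → X → V) : Prop :=
  (∀ x : X, (1 : V) ≤ c {x} x) ∧
  ∀ (𝒜 : Set (Set X)) (B : Set X) (z : X),
    (⨅ y ∈ B, ⨆ A ∈ 𝒜, c A y) * c B z ≤ c (⋃₀ 𝒜) z

theorem vcls_mono {V : Type*} [CompleteLattice V] [Monoid V] [IsQuantale V] {X : Type*}
    (c : Set X → X → V) (hc : IsVCls X c) {A C : Set X} (h : A ⊆ C) (x : X) :
    c A x ≤ c C x := by
  have key := hc.2 ((fun y => {y}) '' C) A x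
  have hU : ⋃₀ ((fun y => ({y} : Set X)) '' C) = C := by
    ext z; simp
  rw [hU] at key
  refine le_trans ?_ key
  have h1 : (1 : V) ≤ ⨅ y ∈ A, ⨆ S ∈ (fun y => ({y} : Set X)) '' C, c S y := by
    refine le_iInf fun y => le_iInf fun hy => ?_
    refine le_trans (hc.1 y) ?_
    exact le_iSup₂_of_le {y} ⟨y, h hy, rfl⟩ le_rfl
  calc c A x = 1 * c A x := (one_mul _).symm
    _ ≤ _ := mul_le_mul_left h1 _

/-- For `V` completely distributive (every element a join of coprimes),
a `V`-closure space preserves finite joins iff its closure tower satisfies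
`c^p ∅ = ∅` and `c^p(A ∪ B) = c^p A ∪ c^p B` for all coprime `p`. -/
theorem approach_iff_tower_coprime {V : Type*} [CompleteLattice V] [Monoid V] [IsQuantale V]
    {X : Type*}
    (hcd : ∀ v : V, v = sSup {p : V | p ≤ v ∧ CoprimeElem p})
    (c : Set X → X → V) (hc : IsVCls X c) :
    ((∀ x : X, c ∅ x = ⊥) ∧ ∀ (A B : Set X) (x : X), c (A ∪ B) x = c A x ⊔ c B x) ↔
    ∀ p : V, CoprimeElem p →
      ({x | p ≤ c ∅ x} = (∅ : Set X)) ∧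
      ∀ A B : Set X, {x | p ≤ c (A ∪ B) x} = {x | p ≤ c A x} ∪ {x | p ≤ c B x} := by
  constructor
  · rintro ⟨h0, hu⟩ p hp
    constructor
    · ext x
      simp only [Set.mem_setOf_eq, Set.mem_empty_iff_false, iff_false]
      intro hle
      rw [h0 x] at hle
      exact absurd (le_bot_iff.mp hle) hp.1.ne'
    · intro A B
      ext x
      simp only [Set.mem_setOf_eq, Set.mem_union, hu A B x]
      constructor
      · exact hp.2 _ _
      · rintro (h | h)
        · exact h.trans le_sup_left
        · exact h.trans le_sup_right
  · intro H
    constructor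
    · intro x
      refine le_bot_iff.mp ?_
      nth_rewrite 1 [hcd (c ∅ x)]
      refine sSup_le fun p hpm => ?_
      exfalso
      have := (H p hpm.2).1
      have hx : x ∈ {x | p ≤ c ∅ x} := hpm.1
      rw [this] at hx
      exact hx
    · intro A B x
      apply le_antisymm
      · nth_rewrite 1 [hcd (c (A ∪ B) x)]
        refine sSup_le fun p hpm => ?_
        have hx : x ∈ {x | p ≤ c (A ∪ B) x} := hpm.1
        rw [(H p hpm.2).2 A B] at hx
        rcases hx with hx | hx
        · exact le_trans hx le_sup_left
        · exact le_trans hx le_sup_right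
      · exact sup_le (vcls_mono c hc Set.subset_union_left x)
          (vcls_mono c hc Set.subset_union_right x)
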